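/- arXiv:2604.13080 — 3 statements merged into one kernel-verified Lean document; each statement's English description precedes it below -/
import Mathlib

section
/- Fix a ∈ (0,1), λ ∈ ℝ and ℏ ∈ ℝ. For m ≥ 1 define v_m(t) = Σ_{j=1}^{m} C(m−1, j−1) ℏ^{j} (1+ℏ)^{m−j} λ^{j} t^{ja}/Γ(1+ja), where C(n,r) denotes the binomial coefficient. Then for all t > 0: (i) v₁(t) = ℏ λ · (1/Γ(a)) ∫₀ᵗ (t−τ)^{a−1} dτ, and (ii) for every m ≥ 2, v_m(t) = (1+ℏ) v_{m−1}(t) + ℏ λ · (1/Γ(a)) ∫₀ᵗ (t−τ)^{a−1} v_{m−1}(τ) dτ. Consequently, with λ = kπ²/L², the functions u_m(x,t) = sin(πx/L) v_m(t) are exactly the HAM deformation terms: u₁ = (ℏπ²k/L²) sin(πx/L) t^{a}/Γ(1+a), u₂ = ℏ(ℏ+1)(π²k/L²) sin(πx/L) t^{a}/Γ(1+a) + ℏ²(π²k/L²)² sin(πx/L) t^{2a}/Γ(1+2a), and so on. -/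
open Real in
/-- The closed-form HAM deformation coefficients
`v_m(t) = Σ_{j=1}^m C(m-1,j-1) ℏ^j (1+ℏ)^(m-j) λ^j t^(ja)/Γ(1+ja)`. -/
noncomputable def hamV (a l ℏ : ℝ) (m : ℕ) (t : ℝ) : ℝ :=
  ∑ j ∈ Finset.Icc 1 m,
    (Nat.choose (m - 1) (j - 1) : ℝ) * ℏ ^ j * (1 + ℏ) ^ (m - j) * l ^ j *
      t ^ ((j : ℝ) * a) / Real.Gamma (1 + (j : ℝ) * a)

open Real MeasureTheory intervalIntegral

lemma aux_integrable (a c t : ℝ) (ha : 0 < a) (hc : 0 ≤ c) (ht : 0 < t) :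
    IntervalIntegrable (fun τ : ℝ => (t - τ) ^ (a - 1) * τ ^ c) volume 0 t := by
  have h1 : IntervalIntegrable (fun τ : ℝ => (t - τ) ^ (a - 1)) volume 0 t := by
    have := (intervalIntegral.intervalIntegrable_rpow' (a := 0) (b := t) (r := a - 1)
      (by linarith)).comp_sub_left t
    simpa using this.symm
  exact h1.mul_continuousOn (Real.continuous_rpow_const hc).continuousOn

lemma aux_beta (a b t : ℝ) (ha : 0 < a) (hb : 0 < b) (ht : 0 < t) :
    ∫ τ in (0:ℝ)..t, (t - τ) ^ (a - 1) * τ ^ (b - 1) =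
      Real.Gamma a * Real.Gamma b / Real.Gamma (a + b) * t ^ (a + b - 1) := by
  have hscaled := Complex.betaIntegral_scaled (b : ℂ) (a : ℂ) ht
  have hne : Complex.Gamma ((b:ℂ) + a) ≠ 0 := by
    rw [show ((b:ℂ) + a) = ((b + a : ℝ) : ℂ) by push_cast; ring, Complex.Gamma_ofReal]
    exact_mod_cast (Real.Gamma_pos_of_pos (by linarith : (0:ℝ) < b + a)).ne'
  have hB : Complex.betaIntegral b a =
      Complex.Gamma b * Complex.Gamma a / Complex.Gamma ((b:ℂ) + a) := by
    have h := Complex.Gamma_mul_Gamma_eq_betaIntegral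
      (s := (b:ℂ)) (t := (a:ℂ)) (by simpa using hb) (by simpa using ha)
    rw [eq_div_iff hne, mul_comm]
    exact h.symm
  have hre : (∫ x in (0:ℝ)..t, (x:ℂ) ^ ((b:ℂ) - 1) * (((t:ℝ):ℂ) - x) ^ ((a:ℂ) - 1)) =
      ((∫ τ in (0:ℝ)..t, (t - τ) ^ (a - 1) * τ ^ (b - 1) : ℝ) : ℂ) := by
    rw [← intervalIntegral.integral_ofReal]
    rw [intervalIntegral.integral_of_le ht.le, intervalIntegral.integral_of_le ht.le]
    refine setIntegral_congr_fun measurableSet_Ioc fun x hx => ?_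
    rw [Complex.ofReal_mul, Complex.ofReal_cpow (by linarith [hx.2] : (0:ℝ) ≤ t - x),
      Complex.ofReal_cpow hx.1.le]
    push_cast
    ring
  have hrhs : ((Real.Gamma a * Real.Gamma b / Real.Gamma (a + b) * t ^ (a + b - 1) : ℝ) : ℂ)
      = ((t:ℝ):ℂ) ^ ((b:ℂ) + (a:ℂ) - 1) *
        (Complex.Gamma b * Complex.Gamma a / Complex.Gamma ((b:ℂ) + a)) := by
    rw [show (b:ℂ) + (a:ℂ) - 1 = ((a + b - 1 : ℝ) : ℂ) by push_cast; ring,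
      show ((b:ℂ) + (a:ℂ)) = ((a + b : ℝ) : ℂ) by push_cast; ring,
      Complex.Gamma_ofReal, ← Complex.ofReal_cpow ht.le]
    simp only [Complex.Gamma_ofReal]
    push_cast
    ring
  apply Complex.ofReal_injective
  rw [hrhs, ← hre, hscaled, hB]

lemma pascal_split (n : ℕ) (g : ℕ → ℝ) :
    ∑ i ∈ Finset.range (n + 2), (Nat.choose (n + 1) i : ℝ) * g i =
      ∑ i ∈ Finset.range (n + 1), (Nat.choose n i : ℝ) * g i +
        ∑ i ∈ Finset.range (n + 1), (Nat.choose n i : ℝ) * g (i + 1) := by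
  rw [Finset.sum_range_succ' (fun i => (Nat.choose (n + 1) i : ℝ) * g i) (n + 1)]
  simp only [Nat.choose_succ_succ, Nat.cast_add, add_mul, Finset.sum_add_distrib,
    Nat.choose_zero_right, Nat.cast_one, one_mul]
  rw [Finset.sum_range_succ (fun i => (Nat.choose n (i + 1) : ℝ) * g (i + 1)) n,
    Finset.sum_range_succ' (fun i => (Nat.choose n i : ℝ) * g i) n]
  simp [Nat.choose_succ_self]
  ring


lemma hamV_range (a l ℏ : ℝ) (m : ℕ) (t : ℝ) :
    hamV a l ℏ (m + 1) t = ∑ i ∈ Finset.range (m + 1),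
      (Nat.choose m i : ℝ) * ℏ ^ (1 + i) * (1 + ℏ) ^ (m - i) * l ^ (1 + i) *
        t ^ ((1 + (i : ℝ)) * a) / Real.Gamma (1 + (1 + (i : ℝ)) * a) := by
  rw [hamV, ← Finset.Ico_add_one_right_eq_Icc, Finset.sum_Ico_eq_sum_range]
  refine Finset.sum_congr (by norm_num) fun i hi => ?_
  rw [show m + 1 - 1 = m from rfl, show 1 + i - 1 = i by omega,
    show m + 1 - (1 + i) = m - i by omega]
  push_cast
  ring_nf


open Real in
/-- The closed forms `v_m` satisfy the HAM scalar recursion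
`v₁ = ℏ λ J_t^a 1` and `v_m = (1+ℏ) v_{m-1} + ℏ λ J_t^a v_{m-1}` for `m ≥ 2`;
consequently, with `λ = k π² / L²`, the functions `u_m(x,t) = sin(π x / L) v_m(t)` are
exactly the HAM deformation terms, e.g. `u₁` and `u₂` have the stated closed forms. -/
theorem hamV_recursion (a l ℏ : ℝ) (ha0 : 0 < a) (ha1 : a < 1) :
    (∀ t : ℝ, 0 < t →
        hamV a l ℏ 1 t =
          ℏ * l * ((1 / Real.Gamma a) * ∫ τ in (0:ℝ)..t, (t - τ) ^ (a - 1))) ∧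
    (∀ t : ℝ, 0 < t → ∀ m : ℕ, 2 ≤ m →
        hamV a l ℏ m t =
          (1 + ℏ) * hamV a l ℏ (m - 1) t +
            ℏ * l * ((1 / Real.Gamma a) *
              ∫ τ in (0:ℝ)..t, (t - τ) ^ (a - 1) * hamV a l ℏ (m - 1) τ)) ∧
    (∀ t : ℝ, 0 < t → ∀ k L x : ℝ, L ≠ 0 → l = k * π ^ 2 / L ^ 2 →
        Real.sin (π * x / L) * hamV a l ℏ 1 t =
          (ℏ * π ^ 2 * k / L ^ 2) * Real.sin (π * x / L) * t ^ a / Real.Gamma (1 + a) ∧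
        Real.sin (π * x / L) * hamV a l ℏ 2 t =
          ℏ * (ℏ + 1) * (π ^ 2 * k / L ^ 2) * Real.sin (π * x / L) * t ^ a /
              Real.Gamma (1 + a) +
            ℏ ^ 2 * (π ^ 2 * k / L ^ 2) ^ 2 * Real.sin (π * x / L) * t ^ (2 * a) /
              Real.Gamma (1 + 2 * a)) := by
  have hΓa : Real.Gamma a ≠ 0 := (Real.Gamma_pos_of_pos ha0).ne'
  have hamV1 : ∀ t : ℝ, hamV a l ℏ 1 t = ℏ * l * t ^ a / Real.Gamma (1 + a) := by
    intro t
    rw [hamV]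
    norm_num
  refine ⟨?_, ?_, ?_⟩
  · intro t ht
    have h1a : Real.Gamma (1 + a) ≠ 0 := (Real.Gamma_pos_of_pos (by linarith)).ne'
    have h := aux_beta a 1 t ha0 one_pos ht
    simp only [show (1:ℝ) - 1 = 0 by norm_num, Real.rpow_zero, mul_one,
      Real.Gamma_one, add_sub_cancel_right] at h
    rw [h, hamV1, add_comm a 1]
    field_simp
  · intro t ht m hm
    obtain ⟨n, rfl⟩ : ∃ n, m = n + 2 := ⟨m - 2, by omega⟩
    simp only [show n + 2 - 1 = n + 1 from rfl]
    set g : ℕ → ℝ := fun i => ℏ ^ (1 + i) * (1 + ℏ) ^ (n + 1 - i) * l ^ (1 + i) *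
      t ^ ((1 + (i : ℝ)) * a) / Real.Gamma (1 + (1 + (i : ℝ)) * a) with hg
    have hint : (∫ τ in (0:ℝ)..t, (t - τ) ^ (a - 1) * hamV a l ℏ (n + 1) τ) =
        ∑ i ∈ Finset.range (n + 1),
          ((Nat.choose n i : ℝ) * ℏ ^ (1 + i) * (1 + ℏ) ^ (n - i) * l ^ (1 + i) /
              Real.Gamma (1 + (1 + (i : ℝ)) * a)) *
            (Real.Gamma a * Real.Gamma ((1 + (i : ℝ)) * a + 1) /
              Real.Gamma (a + ((1 + (i : ℝ)) * a + 1)) *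
              t ^ (a + ((1 + (i : ℝ)) * a + 1) - 1)) := by
      rw [show (fun τ : ℝ => (t - τ) ^ (a - 1) * hamV a l ℏ (n + 1) τ)
          = fun τ : ℝ => ∑ i ∈ Finset.range (n + 1),
            ((Nat.choose n i : ℝ) * ℏ ^ (1 + i) * (1 + ℏ) ^ (n - i) * l ^ (1 + i) /
              Real.Gamma (1 + (1 + (i : ℝ)) * a)) *
              ((t - τ) ^ (a - 1) * τ ^ (((1 + (i : ℝ)) * a + 1) - 1)) from
        funext fun τ => by
          rw [hamV_range, Finset.mul_sum]
          refine Finset.sum_congr rfl fun i _ => ?_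
          rw [show ((1 + (i : ℝ)) * a + 1) - 1 = (1 + (i : ℝ)) * a by ring]
          ring]
      rw [intervalIntegral.integral_finset_sum]
      · refine Finset.sum_congr rfl fun i hi => ?_
        rw [intervalIntegral.integral_const_mul,
          aux_beta a ((1 + (i : ℝ)) * a + 1) t ha0 (by positivity) ht]
      · intro i hi
        refine (aux_integrable a (((1 + (i : ℝ)) * a + 1) - 1) t ha0 ?_ ht).const_mul _
        have : (0:ℝ) ≤ (1 + (i : ℝ)) * a := by positivity
        linarith
    have L1 : hamV a l ℏ (n + 2) t
        = ∑ i ∈ Finset.range (n + 2), (Nat.choose (n + 1) i : ℝ) * g i := by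
      rw [show n + 2 = (n + 1) + 1 from rfl, hamV_range]
      refine Finset.sum_congr rfl fun i _ => ?_
      rw [hg]
      ring
    have A : ∑ i ∈ Finset.range (n + 1), (Nat.choose n i : ℝ) * g i
        = (1 + ℏ) * hamV a l ℏ (n + 1) t := by
      rw [hamV_range, Finset.mul_sum]
      refine Finset.sum_congr rfl fun i hi => ?_
      have hin : i ≤ n := Nat.lt_succ_iff.mp (Finset.mem_range.mp hi)
      rw [hg]
      simp only
      rw [show n + 1 - i = (n - i) + 1 by omega, pow_succ]
      ring
    have B : ℏ * l * ((1 / Real.Gamma a) *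
          ∫ τ in (0:ℝ)..t, (t - τ) ^ (a - 1) * hamV a l ℏ (n + 1) τ)
        = ∑ i ∈ Finset.range (n + 1), (Nat.choose n i : ℝ) * g (i + 1) := by
      rw [hint]
      simp only [Finset.mul_sum]
      refine Finset.sum_congr rfl fun i hi => ?_
      have e1 : Real.Gamma ((1 + (i : ℝ)) * a + 1) = Real.Gamma (1 + (1 + (i : ℝ)) * a) := by
        rw [add_comm]
      have e2 : a + ((1 + (i : ℝ)) * a + 1) = 1 + (1 + ((i : ℝ) + 1)) * a := by ring
      have e3 : a + ((1 + (i : ℝ)) * a + 1) - 1 = (1 + ((i : ℝ) + 1)) * a := by ring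
      have h1 : Real.Gamma (1 + (1 + (i : ℝ)) * a) ≠ 0 := by
        refine (Real.Gamma_pos_of_pos ?_).ne'
        have : (0:ℝ) ≤ (1 + (i : ℝ)) * a := by positivity
        linarith
      have h2 : Real.Gamma (1 + (1 + ((i : ℝ) + 1)) * a) ≠ 0 := by
        refine (Real.Gamma_pos_of_pos ?_).ne'
        have : (0:ℝ) ≤ (1 + ((i : ℝ) + 1)) * a := by positivity
        linarith
      rw [e1, e3, e2, hg]
      simp only
      rw [show n + 1 - (i + 1) = n - i by omega]
      push_cast
      field_simp
      ring
    rw [L1, pascal_split n g, A, B]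
  · intro t ht k L x hL hl
    have hamV2 : hamV a l ℏ 2 t = ℏ * (1 + ℏ) * l * t ^ a / Real.Gamma (1 + a)
        + ℏ ^ 2 * l ^ 2 * t ^ (2 * a) / Real.Gamma (1 + 2 * a) := by
      rw [hamV, show Finset.Icc 1 2 = ({1, 2} : Finset ℕ) from rfl]
      rw [Finset.sum_insert (by norm_num), Finset.sum_singleton]
      norm_num
    constructor
    · rw [hamV1, hl]
      ring
    · rw [hamV2, hl]
      ring
end

section
/- Let a ∈ (0,1), λ ∈ ℝ, and t > 0. Define E(τ) = Σ_{n=0}^{∞} λ^{n} τ^{na}/Γ(1+na) for τ ≥ 0. Then E is differentiable on (0, t], the Caputo derivative integral converges, and (1/Γ(1−a)) ∫₀ᵗ E′(τ) (t−τ)^{−a} dτ = λ E(t). Consequently, u(x,t) = sin(πx/L) E(t) with λ = −kπ²/L² satisfies the time-fractional diffusion equation D_t^{a} u(x,t) = k ∂²u(x,t)/∂x² together with u(x,0) = sin(πx/L) and u(0,t) = u(L,t) = 0. -/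
open Real Filter MeasureTheory intervalIntegral Set

private lemma gamma_lb {a x : ℝ} (ha0 : 0 < a) (ha1 : a < 1) (hx : 1 ≤ x) :
    Real.Gamma x * (x + a - 1) ^ a ≤ Real.Gamma (x + a) := by
  have hy : (0:ℝ) < x + a - 1 := by linarith
  have hx0 : (0:ℝ) < x := by linarith
  have hxa : (0:ℝ) < x + a := by linarith
  have hconv := Real.convexOn_log_Gamma.2 (Set.mem_Ioi.2 hy) (Set.mem_Ioi.2 hxa)
    (le_of_lt ha0) (by linarith : (0:ℝ) ≤ 1 - a) (by ring)
  have hpt : a • (x + a - 1) + (1 - a) • (x + a) = x := by simp [smul_eq_mul]; ring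
  rw [hpt] at hconv
  -- Gamma (x+a) = (x+a-1) * Gamma (x+a-1)
  have hrec : Real.Gamma (x + a) = (x + a - 1) * Real.Gamma (x + a - 1) := by
    have := Real.Gamma_add_one hy.ne'
    rw [show x + a - 1 + 1 = x + a by ring] at this
    exact this
  have hG1 : 0 < Real.Gamma (x + a - 1) := Real.Gamma_pos_of_pos hy
  have hG2 : 0 < Real.Gamma (x + a) := Real.Gamma_pos_of_pos hxa
  have hGx : 0 < Real.Gamma x := Real.Gamma_pos_of_pos hx0
  simp only [Function.comp_apply, smul_eq_mul] at hconv
  -- log Γ x ≤ a * log Γ(x+a-1) + (1-a) * log Γ(x+a)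
  -- log Γ(x+a-1) = log Γ(x+a) - log (x+a-1)
  have hlog : Real.log (Real.Gamma (x + a - 1)) =
      Real.log (Real.Gamma (x + a)) - Real.log (x + a - 1) := by
    rw [hrec, Real.log_mul hy.ne' hG1.ne']; ring
  rw [hlog] at hconv
  have key : Real.log (Real.Gamma x) + a * Real.log (x + a - 1) ≤
      Real.log (Real.Gamma (x + a)) := by linarith
  calc Real.Gamma x * (x + a - 1) ^ a
      = Real.exp (Real.log (Real.Gamma x) + a * Real.log (x + a - 1)) := by
        rw [Real.exp_add, Real.exp_log hGx, Real.rpow_def_of_pos hy]; ring_nf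
    _ ≤ Real.exp (Real.log (Real.Gamma (x + a))) := Real.exp_le_exp.2 key
    _ = Real.Gamma (x + a) := Real.exp_log hG2

private lemma summable_aux {a r : ℝ} (ha0 : 0 < a) (ha1 : a < 1) (hr : 0 ≤ r) :
    Summable (fun n : ℕ => ((n:ℝ) + 1) * r ^ n / Real.Gamma (1 + (n:ℝ) * a)) := by
  have h0 : Tendsto (fun n : ℕ => (n:ℝ)) atTop atTop := tendsto_natCast_atTop_atTop
  have h1 : Tendsto (fun n : ℕ => (n:ℝ) + 1) atTop atTop := tendsto_atTop_add_const_right _ 1 h0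
  have h2 : Tendsto (fun n : ℕ => ((n:ℝ) + 1) * a) atTop atTop := h1.atTop_mul_const ha0
  have htend : Tendsto (fun n : ℕ => (((n:ℝ) + 1) * a) ^ a) atTop atTop :=
    (tendsto_rpow_atTop ha0).comp h2
  refine summable_of_ratio_norm_eventually_le (r := 1/2) (by norm_num) ?_
  filter_upwards [htend.eventually_ge_atTop (4 * r + 1)] with n hn
  have hP : (0:ℝ) < (((n:ℝ) + 1) * a) ^ a := by positivity
  have hGn : 0 < Real.Gamma (1 + (n:ℝ) * a) := Real.Gamma_pos_of_pos (by positivity)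
  have hGn1 : 0 < Real.Gamma (1 + ((n:ℝ) + 1) * a) := Real.Gamma_pos_of_pos (by positivity)
  have hkey : Real.Gamma (1 + (n:ℝ) * a) * (((n:ℝ) + 1) * a) ^ a ≤
      Real.Gamma (1 + ((n:ℝ) + 1) * a) := by
    have := gamma_lb ha0 ha1 (by nlinarith [Nat.cast_nonneg (α := ℝ) n] : (1:ℝ) ≤ 1 + (n:ℝ) * a) (a := a)
    rw [show 1 + (n:ℝ) * a + a - 1 = ((n:ℝ) + 1) * a by ring,
      show 1 + (n:ℝ) * a + a = 1 + ((n:ℝ) + 1) * a by ring] at this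
    exact this
  have h1 : ‖((n:ℝ) + 1 + 1) * r ^ (n + 1) / Real.Gamma (1 + ((n:ℝ) + 1) * a)‖
      = ((n:ℝ) + 2) * r ^ (n + 1) / Real.Gamma (1 + ((n:ℝ) + 1) * a) := by
    rw [Real.norm_eq_abs, abs_of_nonneg (by positivity)]; ring_nf
  have h2 : ‖((n:ℝ) + 1) * r ^ n / Real.Gamma (1 + (n:ℝ) * a)‖
      = ((n:ℝ) + 1) * r ^ n / Real.Gamma (1 + (n:ℝ) * a) := by
    rw [Real.norm_eq_abs, abs_of_nonneg (by positivity)]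
  push_cast
  rw [h1, h2, ← mul_div_assoc, div_le_div_iff₀ hGn1 hGn]
  have hrn : (0:ℝ) ≤ r ^ n := by positivity
  have hh : ((n:ℝ) + 2) * r ^ (n + 1) ≤ 1/2 * (((n:ℝ) + 1) * r ^ n) * (((n:ℝ) + 1) * a) ^ a := by
    rw [pow_succ]
    have hc : (0:ℝ) ≤ ((n:ℝ) + 1) * r ^ n := by positivity
    nlinarith [mul_le_mul_of_nonneg_left hn (by positivity : (0:ℝ) ≤ 1/2 * (((n:ℝ)+1) * r ^ n)),
      mul_nonneg (mul_nonneg (Nat.cast_nonneg (α := ℝ) n) hrn) hr, hc]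
  calc ((n:ℝ) + 2) * r ^ (n + 1) * Real.Gamma (1 + (n:ℝ) * a)
      ≤ (1/2 * (((n:ℝ) + 1) * r ^ n)) * (Real.Gamma (1 + (n:ℝ) * a) * (((n:ℝ) + 1) * a) ^ a) := by
        nlinarith [hGn, hh, mul_le_mul_of_nonneg_left hh hGn.le]
    _ ≤ 1/2 * (((n:ℝ) + 1) * r ^ n) * Real.Gamma (1 + ((n:ℝ) + 1) * a) := by
        apply mul_le_mul_of_nonneg_left hkey (by positivity)

private lemma summable_aux' {a r : ℝ} (ha0 : 0 < a) (ha1 : a < 1) (hr : 0 ≤ r) :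
    Summable (fun n : ℕ => r ^ n / Real.Gamma (1 + (n:ℝ) * a)) := by
  refine (summable_aux ha0 ha1 hr).of_nonneg_of_le (fun n => by positivity) (fun n => ?_)
  have hGn : 0 < Real.Gamma (1 + (n:ℝ) * a) := Real.Gamma_pos_of_pos (by positivity)
  gcongr
  nlinarith [pow_nonneg hr n]

private lemma norm_term {l a y : ℝ} (hy : 0 ≤ y) (n : ℕ) (hG : 0 < Real.Gamma (1 + (n:ℝ) * a)) :
    ‖l ^ n * y ^ ((n:ℝ) * a) / Real.Gamma (1 + (n:ℝ) * a)‖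
      = (|l| * y ^ a) ^ n / Real.Gamma (1 + (n:ℝ) * a) := by
  rw [Real.norm_eq_abs, abs_div, abs_of_nonneg hG.le, abs_mul, abs_pow,
    abs_of_nonneg (Real.rpow_nonneg hy _), mul_pow, mul_comm (n:ℝ) a, Real.rpow_mul hy,
    Real.rpow_natCast]

private lemma hasDerivAt_E {a l : ℝ} (ha0 : 0 < a) (ha1 : a < 1) {τ : ℝ} (hτ : 0 < τ) :
    HasDerivAt (fun y : ℝ => ∑' n : ℕ, l ^ n * y ^ ((n:ℝ) * a) / Real.Gamma (1 + (n:ℝ) * a))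
      (∑' n : ℕ, l ^ n * (((n:ℝ) * a) * τ ^ ((n:ℝ) * a - 1)) / Real.Gamma (1 + (n:ℝ) * a)) τ := by
  set R : ℝ := |l| * (2 * τ + 1) ^ a with hR
  have hR0 : 0 ≤ R := by positivity
  refine hasDerivAt_tsum_of_isPreconnected
    (u := fun n : ℕ => (((n:ℝ) + 1) * R ^ n / Real.Gamma (1 + (n:ℝ) * a)) * (2 * a / τ))
    (t := Set.Ioo (τ/2) (2*τ+1)) (y₀ := τ)
    (g' := fun n y => l ^ n * (((n:ℝ) * a) * y ^ ((n:ℝ) * a - 1)) / Real.Gamma (1 + (n:ℝ) * a))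
    ((summable_aux ha0 ha1 hR0).mul_right _) isOpen_Ioo isPreconnected_Ioo
    (fun n y hy => ?_) (fun n y hy => ?_) ?_ ?_ ?_
  · have hy0 : 0 < y := lt_trans (by positivity) hy.1
    exact ((Real.hasDerivAt_rpow_const (p := (n:ℝ) * a) (Or.inl hy0.ne')).const_mul
      (l ^ n)).div_const _
  · have hy0 : 0 < y := lt_trans (by positivity) hy.1
    have hG : 0 < Real.Gamma (1 + (n:ℝ) * a) := Real.Gamma_pos_of_pos (by positivity)
    have hna : (0:ℝ) ≤ (n:ℝ) * a := by positivity
    have hnorm : ‖l ^ n * (((n:ℝ) * a) * y ^ ((n:ℝ) * a - 1)) / Real.Gamma (1 + (n:ℝ) * a)‖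
        = |l| ^ n * (((n:ℝ) * a) * y ^ ((n:ℝ) * a - 1)) / Real.Gamma (1 + (n:ℝ) * a) := by
      rw [Real.norm_eq_abs, abs_div, abs_of_nonneg hG.le, abs_mul, abs_pow,
        abs_of_nonneg (mul_nonneg hna (Real.rpow_nonneg hy0.le _))]
    rw [hnorm]
    have key : y ^ ((n:ℝ) * a - 1) ≤ (2*τ+1) ^ ((n:ℝ) * a) * (2/τ) := by
      rw [show (n:ℝ) * a - 1 = (n:ℝ) * a + (-1) by ring, Real.rpow_add hy0,
        Real.rpow_neg_one]
      have h1 : y ^ ((n:ℝ) * a) ≤ (2*τ+1) ^ ((n:ℝ) * a) :=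
        Real.rpow_le_rpow hy0.le (by linarith [hy.2]) hna
      have h2 : y⁻¹ ≤ 2/τ := by
        rw [show (2:ℝ)/τ = (τ/2)⁻¹ by rw [inv_div]]
        gcongr
        exact hy.1.le
      exact mul_le_mul h1 h2 (by positivity) (by positivity)
    calc |l| ^ n * (((n:ℝ) * a) * y ^ ((n:ℝ) * a - 1)) / Real.Gamma (1 + (n:ℝ) * a)
        ≤ |l| ^ n * ((((n:ℝ) + 1) * a) * ((2*τ+1) ^ ((n:ℝ) * a) * (2/τ)))
            / Real.Gamma (1 + (n:ℝ) * a) := by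
          gcongr
          linarith
      _ = (((n:ℝ) + 1) * R ^ n / Real.Gamma (1 + (n:ℝ) * a)) * (2 * a / τ) := by
          rw [hR, mul_pow, mul_comm (n:ℝ) a, Real.rpow_mul (by positivity : (0:ℝ) ≤ 2*τ+1),
            Real.rpow_natCast]
          field_simp
  · exact ⟨by linarith, by linarith⟩
  · refine Summable.of_norm ?_
    refine (summable_aux' ha0 ha1 (r := |l| * τ ^ a) (by positivity)).congr fun n => ?_
    exact (norm_term hτ.le n (Real.Gamma_pos_of_pos (by positivity))).symm
  · exact ⟨by linarith, by linarith⟩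

private lemma beta_real {p q T : ℝ} (hp : 0 < p) (hq : 0 < q) (hT : 0 < T) :
    IntervalIntegrable (fun τ : ℝ => τ ^ (p-1) * (T - τ) ^ (q-1)) volume 0 T ∧
    ∫ τ in (0:ℝ)..T, τ ^ (p-1) * (T - τ) ^ (q-1)
      = T ^ (p+q-1) * (Real.Gamma p * Real.Gamma q / Real.Gamma (p+q)) := by
  have hp' : 0 < (p:ℂ).re := by simpa using hp
  have hq' : 0 < (q:ℂ).re := by simpa using hq
  -- pointwise identification of the complex and real integrands on [0, T]
  have hEq : ∀ τ : ℝ, 0 ≤ τ → τ ≤ T →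
      ((τ ^ (p-1) * (T - τ) ^ (q-1) : ℝ) : ℂ)
        = (τ:ℂ) ^ ((p:ℂ) - 1) * ((T:ℂ) - τ) ^ ((q:ℂ) - 1) := by
    intro τ h0 h1
    rw [Complex.ofReal_mul, Complex.ofReal_cpow h0, Complex.ofReal_cpow (by linarith)]
    norm_cast
  constructor
  · -- integrability
    have conv := Complex.betaIntegral_convergent hp' hq'
    have hb : IntervalIntegrable (fun x : ℝ => x ^ (p-1) * (1 - x) ^ (q-1)) volume 0 1 := by
      have h1 : IntervalIntegrable
          (fun x : ℝ => ((x ^ (p-1) * (1 - x) ^ (q-1) : ℝ) : ℂ)) volume 0 1 := by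
        refine conv.congr_ae ?_
        refine Filter.eventuallyEq_of_mem (self_mem_ae_restrict measurableSet_uIoc) ?_
        intro x hx
        rw [Set.uIoc_of_le (by norm_num : (0:ℝ) ≤ 1)] at hx
        show _ = ((x ^ (p-1) * (1 - x) ^ (q-1) : ℝ) : ℂ)
        rw [Complex.ofReal_mul, Complex.ofReal_cpow hx.1.le,
          Complex.ofReal_cpow (by linarith [hx.2] : (0:ℝ) ≤ 1 - x)]
        norm_cast
      rw [intervalIntegrable_iff] at h1 ⊢
      have h2 := h1.re
      refine h2.congr (Filter.eventuallyEq_of_mem (self_mem_ae_restrict measurableSet_uIoc)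
        fun x _ => ?_)
      simp
    have H := hb.comp_mul_left (c := 1/T) enorm_ne_top enorm_ne_top
    rw [show (0:ℝ)/(1/T) = 0 by simp, show (1:ℝ)/(1/T) = T by simp] at H
    have H2 := H.const_mul (T ^ (p+q-2))
    refine H2.congr_ae ?_
    refine Filter.eventuallyEq_of_mem (self_mem_ae_restrict measurableSet_uIoc) fun τ hτ => ?_
    rw [Set.uIoc_of_le hT.le] at hτ
    have h0 : 0 < τ := hτ.1
    have h1 : τ ≤ T := hτ.2
    show T ^ (p+q-2) * ((1/T*τ) ^ (p-1) * (1 - 1/T*τ) ^ (q-1)) = τ ^ (p-1) * (T - τ) ^ (q-1)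
    rw [show 1/T*τ = τ/T by ring, show 1 - τ/T = (T - τ)/T by field_simp,
      Real.div_rpow h0.le hT.le, Real.div_rpow (by linarith) hT.le,
      show p+q-2 = (p-1) + (q-1) by ring, Real.rpow_add hT]
    field_simp
  · -- value
    have hscale := Complex.betaIntegral_scaled (p:ℂ) (q:ℂ) hT
    have hgg := Complex.Gamma_mul_Gamma_eq_betaIntegral hp' hq'
    have hGpq : Complex.Gamma ((p:ℂ) + q) ≠ 0 := by
      rw [show ((p:ℂ) + q) = ((p + q : ℝ):ℂ) by push_cast; ring, Complex.Gamma_ofReal]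
      exact_mod_cast (Real.Gamma_pos_of_pos (by linarith)).ne'
    have hbeta : Complex.betaIntegral p q
        = ((Real.Gamma p * Real.Gamma q / Real.Gamma (p+q) : ℝ) : ℂ) := by
      have h1 : Complex.betaIntegral p q
          = Complex.Gamma p * Complex.Gamma q / Complex.Gamma ((p:ℂ) + q) := by
        rw [hgg, mul_div_cancel_left₀ _ hGpq]
      rw [h1, show ((p:ℂ) + q) = ((p + q : ℝ):ℂ) by push_cast; ring, Complex.Gamma_ofReal,
        Complex.Gamma_ofReal, Complex.Gamma_ofReal]
      norm_cast
    have hleft : (∫ τ in (0:ℝ)..T, (τ:ℂ) ^ ((p:ℂ) - 1) * ((T:ℂ) - τ) ^ ((q:ℂ) - 1))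
        = ((∫ τ in (0:ℝ)..T, τ ^ (p-1) * (T - τ) ^ (q-1) : ℝ) : ℂ) := by
      rw [← intervalIntegral.integral_ofReal]
      refine intervalIntegral.integral_congr fun τ hτ => ?_
      rw [Set.uIcc_of_le hT.le] at hτ
      exact (hEq τ hτ.1 hτ.2).symm
    rw [hleft, hbeta] at hscale
    have hTc : ((T:ℂ)) ^ ((p:ℂ) + q - 1) = ((T ^ (p+q-1) : ℝ) : ℂ) := by
      rw [Complex.ofReal_cpow hT.le]
      norm_cast
    rw [hTc] at hscale
    exact_mod_cast hscale


open Real in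
/-- The Mittag–Leffler-type function `E(τ) = Σ_n λ^n τ^(na)/Γ(1+na)` is differentiable on
`(0,t]`, its Caputo derivative integral converges, and
`(1/Γ(1-a)) ∫₀ᵗ E'(τ)(t-τ)^(-a) dτ = λ E(t)`.  Consequently `u(x,t) = sin(πx/L) E(t)` with
`λ = -kπ²/L²` satisfies the time-fractional diffusion equation `D_t^a u = k ∂²u/∂x²`
together with `u(x,0) = sin(πx/L)` and `u(0,t) = u(L,t) = 0`. -/
theorem mittagLeffler_solves_fractional_diffusion
    (a l t : ℝ) (ha0 : 0 < a) (ha1 : a < 1) (ht : 0 < t)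
    (E : ℝ → ℝ)
    (hE : ∀ τ : ℝ, E τ =
      ∑' n : ℕ, l ^ n * τ ^ ((n : ℝ) * a) / Real.Gamma (1 + (n : ℝ) * a)) :
    (∀ τ ∈ Set.Ioc (0 : ℝ) t, DifferentiableAt ℝ E τ) ∧
    IntervalIntegrable (fun τ => deriv E τ * (t - τ) ^ (-a)) MeasureTheory.volume 0 t ∧
    (1 / Real.Gamma (1 - a)) * (∫ τ in (0:ℝ)..t, deriv E τ * (t - τ) ^ (-a)) = l * E t ∧
    (∀ k L x : ℝ, L ≠ 0 → l = -(k * π ^ 2 / L ^ 2) →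
      ∀ u : ℝ → ℝ → ℝ, (∀ y s, u y s = Real.sin (π * y / L) * E s) →
        (1 / Real.Gamma (1 - a)) *
            (∫ τ in (0:ℝ)..t, deriv (fun s => u x s) τ * (t - τ) ^ (-a)) =
          k * deriv (deriv (fun y => u y t)) x ∧
        u x 0 = Real.sin (π * x / L) ∧ u 0 t = 0 ∧ u L t = 0) := by
  have hEfun : E = fun y : ℝ =>
      ∑' n : ℕ, l ^ n * y ^ ((n : ℝ) * a) / Real.Gamma (1 + (n : ℝ) * a) := funext hE
  have hGa : 0 < Real.Gamma (1 - a) := Real.Gamma_pos_of_pos (by linarith)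
  have hDeriv : ∀ τ : ℝ, 0 < τ → HasDerivAt E
      (∑' n : ℕ, l ^ n * (((n:ℝ) * a) * τ ^ ((n:ℝ) * a - 1)) / Real.Gamma (1 + (n:ℝ) * a)) τ := by
    intro τ hτ
    rw [hEfun]
    exact hasDerivAt_E ha0 ha1 hτ
  set c : ℕ → ℝ := fun n => l ^ n * ((n:ℝ) * a) / Real.Gamma (1 + (n:ℝ) * a) with hc
  set F : ℕ → ℝ → ℝ := fun n τ => c n * (τ ^ ((n:ℝ) * a - 1) * (t - τ) ^ (-a)) with hF
  have hderiv_mul : ∀ τ ∈ Set.Ioc (0:ℝ) t, deriv E τ * (t - τ) ^ (-a) = ∑' n, F n τ := by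
    intro τ hτ
    rw [(hDeriv τ hτ.1).deriv, ← tsum_mul_right]
    refine tsum_congr fun n => ?_
    simp only [hF, hc]
    ring
  have e1 : (1:ℝ) - a - 1 = -a := by ring
  have hBi : ∀ m : ℕ, IntervalIntegrable
      (fun τ => τ ^ (((m:ℝ)+1)*a - 1) * (t-τ) ^ (-a)) volume 0 t := by
    intro m
    have h := (beta_real (p := ((m:ℝ)+1)*a) (q := 1-a) (by positivity) (by linarith) ht).1
    simpa only [e1] using h
  have hBv : ∀ m : ℕ, (∫ τ in (0:ℝ)..t, τ ^ (((m:ℝ)+1)*a - 1) * (t-τ) ^ (-a))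
      = t ^ ((m:ℝ)*a) * (Real.Gamma (((m:ℝ)+1)*a) * Real.Gamma (1-a)
          / Real.Gamma (1 + (m:ℝ)*a)) := by
    intro m
    have h := (beta_real (p := ((m:ℝ)+1)*a) (q := 1-a) (by positivity) (by linarith) ht).2
    rw [show ((m:ℝ)+1)*a + (1-a) - 1 = (m:ℝ)*a by ring,
      show ((m:ℝ)+1)*a + (1-a) = 1 + (m:ℝ)*a by ring] at h
    simpa only [e1] using h
  have hF0 : F 0 = fun _ => (0:ℝ) := by
    funext τ
    simp [hF, hc]
  have hFsucc : ∀ m : ℕ, F (m+1)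
      = fun τ => c (m+1) * (τ ^ (((m:ℝ)+1)*a - 1) * (t - τ) ^ (-a)) := by
    intro m
    funext τ
    simp only [hF]
    push_cast
    ring_nf
  have hcsucc : ∀ m : ℕ, c (m+1) = l ^ (m+1) * (((m:ℝ)+1) * a) / Real.Gamma (1 + ((m:ℝ)+1)*a) := by
    intro m
    simp only [hc]
    push_cast
    ring_nf
  have hFint : ∀ n : ℕ, MeasureTheory.IntegrableOn (F n) (Set.Ioc 0 t) volume := by
    intro n
    cases n with
    | zero =>
      rw [hF0]
      exact MeasureTheory.integrableOn_zero
    | succ m =>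
      rw [← intervalIntegrable_iff_integrableOn_Ioc_of_le ht.le, hFsucc m]
      exact (hBi m).const_mul (c (m+1))
  have hGrec : ∀ m : ℕ, Real.Gamma (1 + ((m:ℝ)+1)*a)
      = (((m:ℝ)+1)*a) * Real.Gamma (((m:ℝ)+1)*a) := by
    intro m
    have h := Real.Gamma_add_one (s := ((m:ℝ)+1)*a) (by positivity)
    rw [add_comm] at h
    exact h
  have hval : ∀ m : ℕ, (∫ τ in Set.Ioc (0:ℝ) t, F (m+1) τ)
      = (l * Real.Gamma (1-a)) * (l ^ m * t ^ ((m:ℝ)*a) / Real.Gamma (1 + (m:ℝ)*a)) := by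
    intro m
    rw [← intervalIntegral.integral_of_le ht.le]
    simp only [hFsucc m]
    rw [intervalIntegral.integral_const_mul, hBv m, hcsucc m, hGrec m, pow_succ]
    have h1 : Real.Gamma (((m:ℝ)+1)*a) ≠ 0 := (Real.Gamma_pos_of_pos (by positivity)).ne'
    have h2 : Real.Gamma (1+(m:ℝ)*a) ≠ 0 := (Real.Gamma_pos_of_pos (by positivity)).ne'
    have h3 : ((m:ℝ)+1)*a ≠ 0 := by positivity
    field_simp
  have hnormval : ∀ m : ℕ, (∫ τ in Set.Ioc (0:ℝ) t, ‖F (m+1) τ‖)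
      = (|l| * Real.Gamma (1-a)) * ((|l| * t^a) ^ m / Real.Gamma (1 + (m:ℝ)*a)) := by
    intro m
    have hcongr : Set.EqOn (fun τ => ‖F (m+1) τ‖)
        (fun τ => |c (m+1)| * (τ ^ (((m:ℝ)+1)*a - 1) * (t - τ)^(-a))) (Set.Ioc (0:ℝ) t) := by
      intro τ hτ
      simp only [hFsucc m, Real.norm_eq_abs, abs_mul]
      rw [abs_of_nonneg (Real.rpow_nonneg hτ.1.le _),
        abs_of_nonneg (Real.rpow_nonneg (by linarith [hτ.2] : (0:ℝ) ≤ t - τ) _)]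
    rw [MeasureTheory.setIntegral_congr_fun measurableSet_Ioc hcongr,
      MeasureTheory.integral_const_mul, ← intervalIntegral.integral_of_le ht.le, hBv m]
    have habs : |c (m+1)| = |l|^(m+1) * (((m:ℝ)+1)*a) / Real.Gamma (1 + ((m:ℝ)+1)*a) := by
      rw [hcsucc m, abs_div, abs_mul, abs_pow,
        abs_of_nonneg (by positivity : (0:ℝ) ≤ ((m:ℝ)+1)*a),
        abs_of_nonneg (Real.Gamma_pos_of_pos (by positivity)).le]
    have h3 : t ^ ((m:ℝ)*a) = (t^a)^m := by
      rw [mul_comm, Real.rpow_mul ht.le, Real.rpow_natCast]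
    rw [habs, hGrec m, pow_succ, h3, mul_pow]
    have h1 : Real.Gamma (((m:ℝ)+1)*a) ≠ 0 := (Real.Gamma_pos_of_pos (by positivity)).ne'
    have h2 : Real.Gamma (1+(m:ℝ)*a) ≠ 0 := (Real.Gamma_pos_of_pos (by positivity)).ne'
    have h4 : ((m:ℝ)+1)*a ≠ 0 := by positivity
    field_simp
  have hBsum : Summable (fun n : ℕ => (Nat.casesOn n 0 (fun m =>
      (|l| * Real.Gamma (1-a)) * ((|l| * t^a) ^ m / Real.Gamma (1 + (m:ℝ)*a))) : ℝ)) := by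
    rw [← summable_nat_add_iff 1]
    simpa using ((summable_aux' ha0 ha1 (r := |l| * t^a) (by positivity)).mul_left
      (|l| * Real.Gamma (1-a)))
  have hle : ∀ n : ℕ, (∫ τ in Set.Ioc (0:ℝ) t, ‖F n τ‖) ≤ (Nat.casesOn n 0 (fun m =>
      (|l| * Real.Gamma (1-a)) * ((|l| * t^a) ^ m / Real.Gamma (1 + (m:ℝ)*a))) : ℝ) := by
    intro n
    cases n with
    | zero => simp [hF0]
    | succ m => exact le_of_eq (hnormval m)
  have hnorm_nonneg : ∀ n : ℕ, 0 ≤ ∫ τ in Set.Ioc (0:ℝ) t, ‖F n τ‖ := fun n =>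
    MeasureTheory.integral_nonneg fun τ => norm_nonneg _
  have hnormsum : Summable (fun n => ∫ τ in Set.Ioc (0:ℝ) t, ‖F n τ‖) :=
    Summable.of_nonneg_of_le hnorm_nonneg hle hBsum
  have hswap := MeasureTheory.integral_tsum_of_summable_integral_norm
    (μ := volume.restrict (Set.Ioc 0 t)) (F := F) hFint hnormsum
  have hsumInt : Summable (fun n => ∫ τ in Set.Ioc (0:ℝ) t, F n τ) :=
    Summable.of_norm_bounded hnormsum fun n =>
      MeasureTheory.norm_integral_le_integral_norm _
  have hmain : (1 / Real.Gamma (1 - a)) * (∫ τ in (0:ℝ)..t, deriv E τ * (t - τ) ^ (-a))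
      = l * E t := by
    have hIntVal : (∫ τ in (0:ℝ)..t, deriv E τ * (t - τ) ^ (-a))
        = Real.Gamma (1-a) * (l * E t) := by
      rw [intervalIntegral.integral_of_le ht.le,
        MeasureTheory.setIntegral_congr_fun measurableSet_Ioc
          (fun τ hτ => hderiv_mul τ hτ), ← hswap, Summable.tsum_eq_zero_add hsumInt,
        show (∫ τ in Set.Ioc (0:ℝ) t, F 0 τ) = 0 by simp [hF0], zero_add,
        tsum_congr (fun m => hval m), tsum_mul_left, hE t]
      ring
    rw [hIntVal]
    field_simp
  refine ⟨fun τ hτ => (hDeriv τ hτ.1).differentiableAt, ?_, hmain, ?_⟩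
  · -- interval integrability
    rw [intervalIntegrable_iff_integrableOn_Ioc_of_le ht.le]
    have hmeas : MeasureTheory.AEStronglyMeasurable (fun τ => deriv E τ * (t - τ) ^ (-a))
        (volume.restrict (Set.Ioc 0 t)) := by
      have h1 : Measurable fun x : ℝ => x ^ (-a) := by
        apply measurable_of_continuousOn_compl_singleton (0:ℝ)
        exact ContinuousOn.rpow_const continuousOn_id fun x hx => Or.inl hx
      exact ((measurable_deriv E).mul (h1.comp (measurable_const.sub measurable_id))).aestronglyMeasurable
    refine ⟨hmeas, ?_⟩
    have hmeasn : ∀ n, AEMeasurable (fun τ => (‖F n τ‖₊ : ENNReal))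
        (volume.restrict (Set.Ioc (0:ℝ) t)) := fun n =>
      (hFint n).aestronglyMeasurable.enorm
    have hbound : ∀ᵐ τ ∂(volume.restrict (Set.Ioc (0:ℝ) t)),
        (‖deriv E τ * (t-τ)^(-a)‖₊ : ENNReal) ≤ ∑' n, (‖F n τ‖₊ : ENNReal) := by
      refine (MeasureTheory.ae_restrict_iff' measurableSet_Ioc).2
        (Filter.Eventually.of_forall fun τ hτ => ?_)
      rw [hderiv_mul τ hτ]
      by_cases hs : Summable fun n => F n τ
      · have hs2 : Summable fun n => ‖F n τ‖₊ := by
          rw [← NNReal.summable_coe]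
          simpa [coe_nnnorm, Real.norm_eq_abs] using hs.abs
        calc (‖∑' n, F n τ‖₊ : ENNReal)
            ≤ ((∑' n, ‖F n τ‖₊ : NNReal) : ENNReal) :=
              ENNReal.coe_le_coe.2 (nnnorm_tsum_le hs2)
          _ = ∑' n, (‖F n τ‖₊ : ENNReal) := ENNReal.coe_tsum hs2
      · rw [tsum_eq_zero_of_not_summable hs]
        simp
    refine lt_of_le_of_lt (MeasureTheory.lintegral_mono_ae hbound) ?_
    rw [MeasureTheory.lintegral_tsum hmeasn]
    have hterm : ∀ n : ℕ, (∫⁻ τ in Set.Ioc (0:ℝ) t, (‖F n τ‖₊ : ENNReal))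
        = ENNReal.ofReal (∫ τ in Set.Ioc (0:ℝ) t, ‖F n τ‖) := by
      intro n
      rw [show (∫ τ in Set.Ioc (0:ℝ) t, ‖F n τ‖)
          = ∫ τ in Set.Ioc (0:ℝ) t, ((‖F n τ‖₊ : ℝ)) by simp [coe_nnnorm]]
      exact MeasureTheory.lintegral_coe_eq_integral _ (by simpa [coe_nnnorm] using (hFint n).norm)
    calc ∑' n, ∫⁻ τ in Set.Ioc (0:ℝ) t, (‖F n τ‖₊ : ENNReal)
        = ∑' n, ENNReal.ofReal (∫ τ in Set.Ioc (0:ℝ) t, ‖F n τ‖) := tsum_congr hterm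
      _ ≤ ∑' n, ENNReal.ofReal ((Nat.casesOn n 0 (fun m =>
            (|l| * Real.Gamma (1-a)) * ((|l| * t^a) ^ m / Real.Gamma (1 + (m:ℝ)*a))) : ℝ)) :=
          ENNReal.tsum_le_tsum fun n => ENNReal.ofReal_le_ofReal (hle n)
      _ = ENNReal.ofReal (∑' n, (Nat.casesOn n 0 (fun m =>
            (|l| * Real.Gamma (1-a)) * ((|l| * t^a) ^ m / Real.Gamma (1 + (m:ℝ)*a))) : ℝ)) := by
          refine (ENNReal.ofReal_tsum_of_nonneg (fun n => ?_) hBsum).symm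
          cases n with
          | zero => exact le_refl 0
          | succ m => positivity
      _ < ⊤ := ENNReal.ofReal_lt_top
  · -- PDE consequence
    intro k L x hL hlval u hu
    have hux : (fun s => u x s) = fun s => Real.sin (π * x / L) * E s := funext fun s => hu x s
    have hsinconst : ∀ y : ℝ, HasDerivAt (fun y : ℝ => π * y / L) (π / L) y := by
      intro y
      simpa using ((hasDerivAt_id y).const_mul π).div_const L
    refine ⟨?_, ?_, ?_, ?_⟩
    · have hinteq : (fun τ => deriv (fun s => u x s) τ * (t-τ)^(-a))
          = fun τ => Real.sin (π*x/L) * (deriv E τ * (t-τ)^(-a)) := by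
        funext τ
        rw [hux, deriv_const_mul_field]
        ring
      rw [hinteq, intervalIntegral.integral_const_mul]
      have huyt : (fun y => u y t) = fun y => Real.sin (π * y / L) * E t := funext fun y => hu y t
      have hd1 : deriv (fun y => u y t) = fun y => Real.cos (π * y / L) * (π / L) * E t := by
        rw [huyt]
        exact funext fun y => (((hsinconst y).sin).mul_const (E t)).deriv
      have hsin2 : HasDerivAt (fun y => Real.cos (π * y / L) * (π / L) * E t)
          (-Real.sin (π * x / L) * (π / L) * (π / L) * E t) x := by
        have h := (((hsinconst x).cos).mul_const (π/L)).mul_const (E t)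
        convert h using 1
      rw [hd1, hsin2.deriv]
      calc (1 / Real.Gamma (1 - a))
            * (Real.sin (π*x/L) * ∫ τ in (0:ℝ)..t, deriv E τ * (t-τ)^(-a))
          = Real.sin (π*x/L)
            * ((1 / Real.Gamma (1 - a)) * ∫ τ in (0:ℝ)..t, deriv E τ * (t-τ)^(-a)) := by ring
        _ = Real.sin (π*x/L) * (l * E t) := by rw [hmain]
        _ = k * (-Real.sin (π * x / L) * (π / L) * (π / L) * E t) := by
            rw [hlval]
            field_simp
    · rw [hu x 0]
      have hE0 : E 0 = 1 := by
        rw [hE 0, tsum_eq_single 0 ?_]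
        · norm_num [Real.Gamma_one]
        · intro n hn
          rw [Real.zero_rpow (by positivity : ((n:ℝ) * a) ≠ 0)]
          simp
      rw [hE0, mul_one]
    · rw [hu 0 t]
      simp
    · rw [hu L t, show π * L / L = π from by field_simp]
      simp [Real.sin_pi]
end

section
/- Let a ∈ (0,1), ℏ ∈ ℝ, x ∈ ℝ and t > 0. Set u₀(x,t) = x, u₁(x,t) = ℏ(x² − x − 1) t^{a}/Γ(1+a), and u₂(x,t) = ℏ(ℏ+1)(x² − x − 1) t^{a}/Γ(1+a) + ℏ²(2x³ − 3x² − 7x + 3) t^{2a}/Γ(1+2a). Then the third HAM deformation term u₃(x,t) = u₂(x,t) + (ℏ/Γ(a)) ∫₀ᵗ (t−τ)^{a−1} R₃(x,τ) dτ, where R₃(x,τ) = D_τ^{a}u₂ − Σ_{i=0}^{2} (∂_x u_i)(∂_x u_{2−i}) − Σ_{i=0}^{2} u_i (∂²_x u_{2−i}) − u₂ + Σ_{i=0}^{2} u_i u_{2−i} (all evaluated at (x,τ), with D_τ^{a}u₂(x,τ) = (1/Γ(1−a)) ∫₀^{τ} (∂u₂/∂s)(x,s)(τ−s)^{−a} ds),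 equals ℏ(ℏ+1)²(x² − x − 1) t^{a}/Γ(1+a) + ℏ²(ℏ+1)(4x³ − 6x² − 14x + 6) t^{2a}/Γ(1+2a) + ℏ³(4x⁴ − 8x³ − 35x² + 31x + 11) t^{3a}/Γ(1+3a) + ℏ³(x⁴ − 2x³ − 7x² + 8x + 2) · Γ(1+2a) t^{3a} / ((Γ(1+a))² Γ(1+3a)). -/
open MeasureTheory intervalIntegral


open MeasureTheory intervalIntegral

lemma real_beta {p q t : ℝ} (hp : 0 < p) (hq : 0 < q) (ht : 0 < t) :
    ∫ τ in (0:ℝ)..t, τ ^ (p - 1) * (t - τ) ^ (q - 1) =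
      Real.Gamma p * Real.Gamma q / Real.Gamma (p + q) * t ^ (p + q - 1) := by
  have hGpq : Real.Gamma (p + q) ≠ 0 := (Real.Gamma_pos_of_pos (by linarith)).ne'
  have hβ := Complex.Gamma_mul_Gamma_eq_betaIntegral (s := (p:ℂ)) (t := (q:ℂ))
    (by simpa using hp) (by simpa using hq)
  have hscaled := Complex.betaIntegral_scaled (p:ℂ) (q:ℂ) ht
  have key : ((∫ τ in (0:ℝ)..t, τ ^ (p - 1) * (t - τ) ^ (q - 1) : ℝ) : ℂ)
      = ∫ x in (0:ℝ)..t, (x : ℂ) ^ ((p:ℂ) - 1) * ((t : ℂ) - x) ^ ((q:ℂ) - 1) := by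
    rw [← intervalIntegral.integral_ofReal]
    apply intervalIntegral.integral_congr
    intro τ hτ
    rw [Set.uIcc_of_le ht.le] at hτ
    show ((τ ^ (p - 1) * (t - τ) ^ (q - 1) : ℝ) : ℂ)
      = (τ:ℂ) ^ ((p:ℂ) - 1) * ((t:ℂ) - (τ:ℂ)) ^ ((q:ℂ) - 1)
    rw [Complex.ofReal_mul, Complex.ofReal_cpow hτ.1,
      Complex.ofReal_cpow (by linarith [hτ.2] : (0:ℝ) ≤ t - τ)]
    push_cast
    ring
  have hβval : Complex.betaIntegral p q
      = ((Real.Gamma p * Real.Gamma q / Real.Gamma (p + q) : ℝ) : ℂ) := by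
    have h := hβ
    rw [show ((p:ℂ) + q) = ((p + q : ℝ) : ℂ) by push_cast; ring] at h
    rw [Complex.Gamma_ofReal, Complex.Gamma_ofReal, Complex.Gamma_ofReal] at h
    push_cast
    rw [eq_div_iff (by exact_mod_cast hGpq)]
    linear_combination -h
  apply Complex.ofReal_injective
  rw [key, hscaled, hβval, Complex.ofReal_mul, Complex.ofReal_cpow ht.le]
  push_cast
  ring

lemma beta_integrable {p q t : ℝ} (hp : 0 < p) (hq : 0 < q) (ht : 0 < t) :
    IntervalIntegrable (fun τ => τ ^ (p - 1) * (t - τ) ^ (q - 1)) volume 0 t := by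
  apply IntervalIntegrable.trans (b := t / 2)
  · apply IntervalIntegrable.mul_continuousOn
    · exact intervalIntegral.intervalIntegrable_rpow' (by linarith)
    · apply ContinuousOn.rpow_const
      · exact (continuous_const.sub continuous_id).continuousOn
      · intro τ hτ
        rw [Set.uIcc_of_le (by linarith)] at hτ
        exact Or.inl (by intro h; nlinarith [hτ.2])
  · apply IntervalIntegrable.continuousOn_mul
    · have h1 : IntervalIntegrable (fun x : ℝ => x ^ (q - 1)) volume (t - t) (t - t / 2) :=
        intervalIntegral.intervalIntegrable_rpow' (by linarith)
      simpa using (h1.comp_sub_left t).symm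
    · apply ContinuousOn.rpow_const continuousOn_id
      intro τ hτ
      rw [Set.uIcc_of_le (by linarith)] at hτ
      refine Or.inl ?_
      intro h
      rw [id_eq] at h
      nlinarith [hτ.1]

lemma hasDerivAt_cubic (b c d e x : ℝ) :
    HasDerivAt (fun y : ℝ => b * y ^ 3 + c * y ^ 2 + d * y + e)
      (3 * b * x ^ 2 + 2 * c * x + d) x := by
  have h3 : HasDerivAt (fun y : ℝ => y ^ 3) (3 * x ^ 2) x := by
    simpa using hasDerivAt_pow 3 x
  have h2 : HasDerivAt (fun y : ℝ => y ^ 2) (2 * x) x := by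
    simpa using hasDerivAt_pow 2 x
  have := (((h3.const_mul b).add (h2.const_mul c)).add
    ((hasDerivAt_id' (x := x)).const_mul d)).add_const e
  exact this.congr_deriv (by ring)

lemma deriv_cubic (b c d e x : ℝ) :
    deriv (fun y : ℝ => b * y ^ 3 + c * y ^ 2 + d * y + e) x
      = 3 * b * x ^ 2 + 2 * c * x + d :=
  (hasDerivAt_cubic b c d e x).deriv

lemma deriv2_cubic (b c d e x : ℝ) :
    deriv (deriv (fun y : ℝ => b * y ^ 3 + c * y ^ 2 + d * y + e)) x
      = 6 * b * x + 2 * c := by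
  have h : deriv (fun y : ℝ => b * y ^ 3 + c * y ^ 2 + d * y + e)
      = fun y => 3 * b * y ^ 2 + 2 * c * y + d :=
    funext fun y => (hasDerivAt_cubic b c d e y).deriv
  rw [h]
  have h2 : HasDerivAt (fun y : ℝ => y ^ 2) (2 * x) x := by
    simpa using hasDerivAt_pow 2 x
  have k : HasDerivAt (fun y : ℝ => 3 * b * y ^ 2 + 2 * c * y + d)
      (6 * b * x + 2 * c) x := by
    have := ((h2.const_mul (3 * b)).add
      ((hasDerivAt_id' (x := x)).const_mul (2 * c))).add_const d
    exact this.congr_deriv (by ring)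
  exact k.deriv

lemma deriv_rpow2 (A B b c : ℝ) {s : ℝ} (hs : 0 < s) :
    deriv (fun s' : ℝ => A * s' ^ b + B * s' ^ c) s
      = A * (b * s ^ (b - 1)) + B * (c * s ^ (c - 1)) := by
  have h1 : HasDerivAt (fun s' : ℝ => s' ^ b) (b * s ^ (b - 1)) s :=
    Real.hasDerivAt_rpow_const (Or.inl hs.ne')
  have h2 : HasDerivAt (fun s' : ℝ => s' ^ c) (c * s ^ (c - 1)) s :=
    Real.hasDerivAt_rpow_const (Or.inl hs.ne')
  exact ((h1.const_mul A).add (h2.const_mul B)).deriv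



/-- Third HAM deformation term for the nonlinear equation
`N[u] = D_t^a u - (∂_x u)² - u ∂²_x u - u + u²`, with
`u₀(x,t) = x`, `u₁ = ℏ(x²-x-1)t^a/Γ(1+a)` and
`u₂ = ℏ(ℏ+1)(x²-x-1)t^a/Γ(1+a) + ℏ²(2x³-3x²-7x+3)t^(2a)/Γ(1+2a)`:
`u₃ = u₂ + ℏ J_t^a R₃`, where
`R₃ = D_τ^a u₂ - Σ_{i=0}^2 ∂_x u_i ∂_x u_{2-i} - Σ_{i=0}^2 u_i ∂²_x u_{2-i} - u₂ + Σ_{i=0}^2 u_i u_{2-i}`,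
equals `ℏ(ℏ+1)²(x²-x-1)t^a/Γ(1+a) + ℏ²(ℏ+1)(4x³-6x²-14x+6)t^(2a)/Γ(1+2a)
+ ℏ³(4x⁴-8x³-35x²+31x+11)t^(3a)/Γ(1+3a)
+ ℏ³(x⁴-2x³-7x²+8x+2)·Γ(1+2a)t^(3a)/((Γ(1+a))²Γ(1+3a))`. -/
theorem ham_third_deformation_term_nonlinear
    (a ℏ x t : ℝ) (ha0 : 0 < a) (ha1 : a < 1) (ht : 0 < t)
    (u : ℕ → ℝ → ℝ → ℝ)
    (hu0 : ∀ y s, u 0 y s = y)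
    (hu1 : ∀ y s, u 1 y s = ℏ * (y ^ 2 - y - 1) * s ^ a / Real.Gamma (1 + a))
    (hu2 : ∀ y s, u 2 y s =
      ℏ * (ℏ + 1) * (y ^ 2 - y - 1) * s ^ a / Real.Gamma (1 + a) +
        ℏ ^ 2 * (2 * y ^ 3 - 3 * y ^ 2 - 7 * y + 3) * s ^ (2 * a) /
          Real.Gamma (1 + 2 * a)) :
    u 2 x t + (ℏ / Real.Gamma a) *
        (∫ τ in (0:ℝ)..t, (t - τ) ^ (a - 1) *
          ((1 / Real.Gamma (1 - a)) *
              (∫ s in (0:ℝ)..τ, deriv (fun s' => u 2 x s') s * (τ - s) ^ (-a)) -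
            (∑ i ∈ Finset.range 3,
              deriv (fun y => u i y τ) x * deriv (fun y => u (2 - i) y τ) x) -
            (∑ i ∈ Finset.range 3,
              u i x τ * deriv (deriv (fun y => u (2 - i) y τ)) x) -
            u 2 x τ +
            (∑ i ∈ Finset.range 3, u i x τ * u (2 - i) x τ))) =
      ℏ * (ℏ + 1) ^ 2 * (x ^ 2 - x - 1) * t ^ a / Real.Gamma (1 + a) +
        ℏ ^ 2 * (ℏ + 1) * (4 * x ^ 3 - 6 * x ^ 2 - 14 * x + 6) * t ^ (2 * a) /
          Real.Gamma (1 + 2 * a) +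
        ℏ ^ 3 * (4 * x ^ 4 - 8 * x ^ 3 - 35 * x ^ 2 + 31 * x + 11) * t ^ (3 * a) /
          Real.Gamma (1 + 3 * a) +
        ℏ ^ 3 * (x ^ 4 - 2 * x ^ 3 - 7 * x ^ 2 + 8 * x + 2) *
          (Real.Gamma (1 + 2 * a) * t ^ (3 * a) /
            ((Real.Gamma (1 + a)) ^ 2 * Real.Gamma (1 + 3 * a))) := by
  have ha' : (0:ℝ) < 1 - a := by linarith
  have hG1 : 0 < Real.Gamma (1 + a) := Real.Gamma_pos_of_pos (by linarith)
  have hG2 : 0 < Real.Gamma (1 + 2 * a) := Real.Gamma_pos_of_pos (by linarith)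
  have hG3 : 0 < Real.Gamma (1 + 3 * a) := Real.Gamma_pos_of_pos (by linarith)
  have hGa : 0 < Real.Gamma a := Real.Gamma_pos_of_pos ha0
  have hG1a : 0 < Real.Gamma (1 - a) := Real.Gamma_pos_of_pos ha'
  have hG2a : 0 < Real.Gamma (2 * a) := Real.Gamma_pos_of_pos (by linarith)
  have hrec1 : Real.Gamma (1 + a) = a * Real.Gamma a := by
    rw [add_comm]; exact Real.Gamma_add_one ha0.ne'
  have hrec2 : Real.Gamma (1 + 2 * a) = 2 * a * Real.Gamma (2 * a) := by
    rw [add_comm]; exact Real.Gamma_add_one (by positivity)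
  -- the Caputo derivative of u₂ in closed form
  have inner : ∀ τ : ℝ, 0 < τ →
      (1 / Real.Gamma (1 - a)) *
          (∫ s in (0:ℝ)..τ, deriv (fun s' => u 2 x s') s * (τ - s) ^ (-a))
        = ℏ * (ℏ + 1) * (x ^ 2 - x - 1) +
            ℏ ^ 2 * (2 * x ^ 3 - 3 * x ^ 2 - 7 * x + 3) * τ ^ a / Real.Gamma (1 + a) := by
    intro τ hτ
    set A := ℏ * (ℏ + 1) * (x ^ 2 - x - 1) / Real.Gamma (1 + a) with hA
    set B := ℏ ^ 2 * (2 * x ^ 3 - 3 * x ^ 2 - 7 * x + 3) / Real.Gamma (1 + 2 * a) with hB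
    have hstep : (∫ s in (0:ℝ)..τ, deriv (fun s' => u 2 x s') s * (τ - s) ^ (-a))
        = ∫ s in (0:ℝ)..τ, ((A * a) * (s ^ (a - 1) * (τ - s) ^ (1 - a - 1))
            + (B * (2 * a)) * (s ^ (2 * a - 1) * (τ - s) ^ (1 - a - 1))) := by
      apply intervalIntegral.integral_congr_ae
      filter_upwards with s hs
      rw [Set.uIoc_of_le hτ.le] at hs
      have hfun : (fun s' : ℝ => u 2 x s') = fun s' => A * s' ^ a + B * s' ^ (2 * a) := by
        funext s'
        rw [hu2, hA, hB]; ring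
      rw [hfun, deriv_rpow2 A B a (2 * a) hs.1,
        show (1:ℝ) - a - 1 = -a by ring]
      ring
    rw [hstep, intervalIntegral.integral_add
        ((beta_integrable ha0 ha' hτ).const_mul _)
        ((beta_integrable (by positivity) ha' hτ).const_mul _),
      intervalIntegral.integral_const_mul, intervalIntegral.integral_const_mul,
      real_beta ha0 ha' hτ, real_beta (by positivity : (0:ℝ) < 2 * a) ha' hτ,
      show a + (1 - a) - 1 = 0 by ring, show a + (1 - a) = 1 by ring,
      show 2 * a + (1 - a) - 1 = a by ring, show 2 * a + (1 - a) = 1 + a by ring,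
      Real.Gamma_one, Real.rpow_zero, hA, hB, hrec1, hrec2]
    field_simp
  -- closed form of the outer integrand
  have houter : (∫ τ in (0:ℝ)..t, (t - τ) ^ (a - 1) *
          ((1 / Real.Gamma (1 - a)) *
              (∫ s in (0:ℝ)..τ, deriv (fun s' => u 2 x s') s * (τ - s) ^ (-a)) -
            (∑ i ∈ Finset.range 3,
              deriv (fun y => u i y τ) x * deriv (fun y => u (2 - i) y τ) x) -
            (∑ i ∈ Finset.range 3,
              u i x τ * deriv (deriv (fun y => u (2 - i) y τ)) x) -
            u 2 x τ +
            (∑ i ∈ Finset.range 3, u i x τ * u (2 - i) x τ)))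
      = ∫ τ in (0:ℝ)..t,
          ((ℏ * (ℏ + 1) * (x ^ 2 - x - 1)) * (τ ^ ((1:ℝ) - 1) * (t - τ) ^ (a - 1))
            + ((ℏ ^ 2 + ℏ * (ℏ + 1)) * (2 * x ^ 3 - 3 * x ^ 2 - 7 * x + 3) / Real.Gamma (1 + a))
                * (τ ^ (1 + a - 1) * (t - τ) ^ (a - 1))
            + (ℏ ^ 2 * (4 * x ^ 4 - 8 * x ^ 3 - 35 * x ^ 2 + 31 * x + 11) / Real.Gamma (1 + 2 * a)
                + ℏ ^ 2 * (x ^ 4 - 2 * x ^ 3 - 7 * x ^ 2 + 8 * x + 2) / Real.Gamma (1 + a) ^ 2)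
                * (τ ^ (1 + 2 * a - 1) * (t - τ) ^ (a - 1))) := by
    apply intervalIntegral.integral_congr_ae
    filter_upwards with τ hτ
    rw [Set.uIoc_of_le ht.le] at hτ
    have hτ0 : 0 < τ := hτ.1
    have e0 : (fun y : ℝ => u 0 y τ)
        = fun y => 0 * y ^ 3 + 0 * y ^ 2 + 1 * y + 0 :=
      funext fun y => by rw [hu0]; ring
    have e1 : (fun y : ℝ => u 1 y τ)
        = fun y => 0 * y ^ 3 + (ℏ * τ ^ a / Real.Gamma (1 + a)) * y ^ 2
            + (-(ℏ * τ ^ a / Real.Gamma (1 + a))) * y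
            + (-(ℏ * τ ^ a / Real.Gamma (1 + a))) :=
      funext fun y => by rw [hu1]; ring
    have e2 : (fun y : ℝ => u 2 y τ)
        = fun y => (2 * ℏ ^ 2 * τ ^ (2 * a) / Real.Gamma (1 + 2 * a)) * y ^ 3
            + (ℏ * (ℏ + 1) * τ ^ a / Real.Gamma (1 + a)
                - 3 * ℏ ^ 2 * τ ^ (2 * a) / Real.Gamma (1 + 2 * a)) * y ^ 2
            + (-(ℏ * (ℏ + 1) * τ ^ a / Real.Gamma (1 + a))
                - 7 * ℏ ^ 2 * τ ^ (2 * a) / Real.Gamma (1 + 2 * a)) * y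
            + (-(ℏ * (ℏ + 1) * τ ^ a / Real.Gamma (1 + a))
                + 3 * ℏ ^ 2 * τ ^ (2 * a) / Real.Gamma (1 + 2 * a)) :=
      funext fun y => by rw [hu2]; ring
    rw [show ((1:ℝ) - 1) = 0 by ring, show (1:ℝ) + a - 1 = a by ring,
      show (1:ℝ) + 2 * a - 1 = 2 * a by ring, Real.rpow_zero]
    simp only [Finset.sum_range_succ, Finset.sum_range_zero]
    norm_num only
    rw [inner τ hτ0, e0, e1, e2, deriv_cubic, deriv_cubic, deriv_cubic,
      deriv2_cubic, deriv2_cubic, deriv2_cubic, hu0, hu1, hu2,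
      show 2 * a = a + a by ring, Real.rpow_add hτ0]
    ring
  rw [houter,
    intervalIntegral.integral_add
      (((beta_integrable one_pos ha0 ht).const_mul _).add
        ((beta_integrable (by linarith : (0:ℝ) < 1 + a) ha0 ht).const_mul _))
      ((beta_integrable (by linarith : (0:ℝ) < 1 + 2 * a) ha0 ht).const_mul _),
    intervalIntegral.integral_add
      ((beta_integrable one_pos ha0 ht).const_mul _)
      ((beta_integrable (by linarith : (0:ℝ) < 1 + a) ha0 ht).const_mul _),
    intervalIntegral.integral_const_mul, intervalIntegral.integral_const_mul,
    intervalIntegral.integral_const_mul,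
    real_beta one_pos ha0 ht, real_beta (by linarith : (0:ℝ) < 1 + a) ha0 ht,
    real_beta (by linarith : (0:ℝ) < 1 + 2 * a) ha0 ht,
    show (1:ℝ) + a - 1 = a by ring, show (1:ℝ) + a + a - 1 = 2 * a by ring,
    show (1:ℝ) + 2 * a + a - 1 = 3 * a by ring,
    show (1:ℝ) + a + a = 1 + 2 * a by ring,
    show (1:ℝ) + 2 * a + a = 1 + 3 * a by ring,
    Real.Gamma_one, hu2 x t]
  field_simp
  ring
end
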